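/- arXiv:2207.02709 — 2 statements merged into one kernel-verified Lean document; each statement's English description precedes it below -/
import Mathlib

section
/- Rasiowa–Sikorski Lemma: Let B be a Boolean algebra, F a countable family of subsets of B such that every member of F has a supremum and an infimum in B, and let a be an element of B with a ≠ 1 (the top element). Then there exists an ultrafilter U on B that does not contain a and is F-compatible, i.e., for each S ∈ F: (the supremum of S belongs to U if and only if S ∩ U ≠ ∅) and (the infimum of S belongs to U if and only if S ⊆ U). -/
/-- An ultrafilter on a Boolean algebra: contains `⊤`, not `⊥`, closed under
binary meets, upward closed, and for every element contains it or its complement. -/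
structure BAUltrafilter (B : Type*) [BooleanAlgebra B] where
  carrier : Set B
  top_mem : ⊤ ∈ carrier
  bot_not_mem : ⊥ ∉ carrier
  inf_mem : ∀ a b : B, a ∈ carrier → b ∈ carrier → a ⊓ b ∈ carrier
  up_closed : ∀ a b : B, a ∈ carrier → a ≤ b → b ∈ carrier
  compl_mem : ∀ a : B, a ∈ carrier ∨ aᶜ ∈ carrier

/-- Rasiowa–Sikorski lemma: for a countable regular family `F` of subsets of a
Boolean algebra and `a ≠ ⊤`, there is an `F`-compatible ultrafilter avoiding `a`. -/
theorem rasiowa_sikorski {B : Type*} [BooleanAlgebra B]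
    (F : Set (Set B)) (hFc : F.Countable)
    (hreg : ∀ S ∈ F, (∃ m : B, IsLUB S m) ∧ (∃ i : B, IsGLB S i))
    (a : B) (ha : a ≠ ⊤) :
    ∃ U : BAUltrafilter B, a ∉ U.carrier ∧
      ∀ S ∈ F,
        (∀ m : B, IsLUB S m → (m ∈ U.carrier ↔ (S ∩ U.carrier).Nonempty)) ∧
        (∀ i : B, IsGLB S i → (i ∈ U.carrier ↔ S ⊆ U.carrier)) := by
  classical
  -- density step
  have key : ∀ p : B, p ≠ ⊥ → ∀ S ∈ F, ∃ q : B, q ≤ p ∧ q ≠ ⊥ ∧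
      (∀ m : B, IsLUB S m → (q ≤ mᶜ ∨ ∃ s ∈ S, q ≤ s)) ∧
      (∀ i : B, IsGLB S i → (q ≤ i ∨ ∃ s ∈ S, q ≤ sᶜ)) := by
    intro p hp S hS
    obtain ⟨⟨m, hm⟩, ⟨i, hi⟩⟩ := hreg S hS
    have step1 : ∃ q : B, q ≤ p ∧ q ≠ ⊥ ∧ (q ≤ mᶜ ∨ ∃ s ∈ S, q ≤ s) := by
      by_cases h : p ⊓ mᶜ = ⊥
      · have hpm : p ≤ m := by
          rw [← sdiff_eq] at h; exact sdiff_eq_bot_iff.mp h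
        have hs : ∃ s ∈ S, p ⊓ s ≠ ⊥ := by
          by_contra hc
          push_neg at hc
          have hub : ∀ s ∈ S, s ≤ pᶜ := by
            intro s hsS
            have : s \ pᶜ = ⊥ := by
              rw [sdiff_eq, compl_compl, inf_comm]; exact hc s hsS
            exact sdiff_eq_bot_iff.mp this
          have hmp : m ≤ pᶜ := hm.2 hub
          have : p ≤ ⊥ := by
            calc p ≤ p ⊓ pᶜ := le_inf le_rfl (hpm.trans hmp)
            _ = ⊥ := inf_compl_eq_bot
          exact hp (le_bot_iff.mp this)
        obtain ⟨s, hsS, hsne⟩ := hs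
        exact ⟨p ⊓ s, inf_le_left, hsne, Or.inr ⟨s, hsS, inf_le_right⟩⟩
      · exact ⟨p ⊓ mᶜ, inf_le_left, h, Or.inl inf_le_right⟩
    obtain ⟨q, hqp, hq, hqsup⟩ := step1
    have step2 : ∃ r : B, r ≤ q ∧ r ≠ ⊥ ∧ (r ≤ i ∨ ∃ s ∈ S, r ≤ sᶜ) := by
      by_cases h : ∃ s ∈ S, q ⊓ sᶜ ≠ ⊥
      · obtain ⟨s, hsS, hne⟩ := h
        exact ⟨q ⊓ sᶜ, inf_le_left, hne, Or.inr ⟨s, hsS, inf_le_right⟩⟩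
      · push_neg at h
        have hlb : ∀ s ∈ S, q ≤ s := by
          intro s hsS
          have : q \ s = ⊥ := by rw [sdiff_eq]; exact h s hsS
          exact sdiff_eq_bot_iff.mp this
        exact ⟨q, le_rfl, hq, Or.inl (hi.2 hlb)⟩
    obtain ⟨r, hrq, hr, hrinf⟩ := step2
    refine ⟨r, hrq.trans hqp, hr, ?_, ?_⟩
    · intro m' hm'
      obtain rfl : m' = m := hm'.unique hm
      rcases hqsup with h | ⟨s, hsS, hqs⟩
      · exact Or.inl (hrq.trans h)
      · exact Or.inr ⟨s, hsS, hrq.trans hqs⟩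
    · intro i' hi'
      obtain rfl : i' = i := hi'.unique hi
      exact hrinf
  choose! nxt hle hne hsup hinf using key
  obtain ⟨f, hf⟩ : ∃ f : ℕ → Set B, ∀ S ∈ F, ∃ n, f n = S := by
    rcases F.eq_empty_or_nonempty with h | h
    · exact ⟨fun _ => ∅, by simp [h]⟩
    · obtain ⟨f, hfr⟩ := hFc.exists_eq_range h
      exact ⟨f, fun S hS => by rw [hfr] at hS; obtain ⟨n, hn⟩ := hS; exact ⟨n, hn⟩⟩
  let p : ℕ → B := fun n =>
    Nat.rec aᶜ (fun k pk => if f k ∈ F then nxt pk (f k) else pk) n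
  have hp0 : p 0 = aᶜ := rfl
  have hpsucc : ∀ n, p (n + 1) = if f n ∈ F then nxt (p n) (f n) else p n := fun n => rfl
  have hpne : ∀ n, p n ≠ ⊥ := by
    intro n
    induction n with
    | zero => rw [hp0]; simpa [compl_eq_bot] using ha
    | succ n ih =>
      rw [hpsucc]
      split_ifs with h
      · exact hne (p n) ih (f n) h
      · exact ih
  have hdec : ∀ n, p (n + 1) ≤ p n := by
    intro n
    rw [hpsucc]
    split_ifs with h
    · exact hle (p n) (hpne n) (f n) h
    · exact le_rfl
  have hmono : ∀ m n, m ≤ n → p n ≤ p m := by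
    intro m n hmn
    induction hmn with
    | refl => exact le_rfl
    | step _ ih => exact (hdec _).trans ih
  -- the filter generated by the p n
  let G : Order.PFilter B :=
    ⟨{ carrier := {b : Bᵒᵈ | ∃ n, p n ≤ OrderDual.ofDual b}
       lower' := by
         rintro x y hxy ⟨n, hn⟩
         exact ⟨n, hn.trans hxy⟩
       nonempty' := ⟨OrderDual.toDual ⊤, 0, le_top⟩
       directed' := by
         rintro x ⟨nx, hx⟩ y ⟨ny, hy⟩
         refine ⟨OrderDual.toDual (OrderDual.ofDual x ⊓ OrderDual.ofDual y),
           ⟨max nx ny, le_inf ((hmono nx _ (le_max_left _ _)).trans hx)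
             ((hmono ny _ (le_max_right _ _)).trans hy)⟩, inf_le_left, inf_le_right⟩ }⟩
  have hGmem : ∀ b : B, b ∈ G ↔ ∃ n, p n ≤ b := fun b => Iff.rfl
  have hdisj : Disjoint (G : Set B) ((Order.Ideal.principal a : Order.Ideal B) : Set B) := by
    rw [Set.disjoint_left]
    rintro b ⟨n, hn⟩ hb
    have hba : b ≤ a := hb
    have h1 : p n ≤ aᶜ := (hmono 0 n (Nat.zero_le n)).trans_eq hp0
    have : p n ≤ ⊥ := by
      calc p n ≤ a ⊓ aᶜ := le_inf (hn.trans hba) h1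
      _ = ⊥ := inf_compl_eq_bot
    exact hpne n (le_bot_iff.mp this)
  obtain ⟨J, hJprime, hJI, hJdisj⟩ :=
    DistribLattice.prime_ideal_of_disjoint_filter_ideal hdisj
  have haJ : a ∈ J := hJI (Order.Ideal.mem_principal.mpr le_rfl)
  have hbotJ : (⊥ : B) ∈ J := J.lower bot_le haJ
  have htopJ : (⊤ : B) ∉ J :=
    Set.disjoint_left.mp hJdisj ((hGmem ⊤).mpr ⟨0, le_top⟩)
  have hGU : ∀ b : B, (∃ n, p n ≤ b) → b ∉ J := fun b hb =>
    Set.disjoint_left.mp hJdisj ((hGmem b).mpr hb)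
  refine ⟨⟨{b | b ∉ J}, htopJ, not_not.mpr hbotJ, ?_, ?_, ?_⟩, not_not.mpr haJ, ?_⟩
  · intro x y hx hy hxy
    rcases hJprime.mem_or_mem hxy with h | h
    exacts [hx h, hy h]
  · intro x y hx hxy hy
    exact hx (J.lower hxy hy)
  · intro x
    rcases hJprime.toIsProper.notMem_or_compl_notMem (x := x) with h | h
    exacts [Or.inl h, Or.inr h]
  · intro S hS
    obtain ⟨n, rfl⟩ := hf S hS
    have hpn1 : p (n + 1) = nxt (p n) (f n) := by rw [hpsucc, if_pos hS]
    constructor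
    · intro m hm
      constructor
      · intro hmU
        rcases hsup (p n) (hpne n) (f n) hS m hm with hc | ⟨s, hsS, hqs⟩
        · have hmc : mᶜ ∉ J := hGU mᶜ ⟨n + 1, hpn1 ▸ hc⟩
          have : m ∈ J ∨ mᶜ ∈ J :=
            hJprime.mem_or_mem (by rw [inf_compl_eq_bot]; exact hbotJ)
          rcases this with h | h
          exacts [absurd h hmU, absurd h hmc]
        · exact ⟨s, hsS, hGU s ⟨n + 1, hpn1 ▸ hqs⟩⟩
      · rintro ⟨s, hsS, hsU⟩
        intro hmJ
        exact hsU (J.lower (hm.1 hsS) hmJ)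
    · intro i hi
      constructor
      · intro hiU s hsS
        intro hsJ
        exact hiU (J.lower (hi.1 hsS) hsJ)
      · intro hSU
        rcases hinf (p n) (hpne n) (f n) hS i hi with hc | ⟨s, hsS, hqs⟩
        · exact hGU i ⟨n + 1, hpn1 ▸ hc⟩
        · have h1 : sᶜ ∉ J := hGU sᶜ ⟨n + 1, hpn1 ▸ hqs⟩
          have h2 : s ∉ J := hSU hsS
          have : s ∈ J ∨ sᶜ ∈ J :=
            hJprime.mem_or_mem (by rw [inf_compl_eq_bot]; exact hbotJ)
          rcases this with h | h
          exacts [absurd h h2, absurd h h1]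
end

section
/- Let B be a Boolean algebra, a ∈ B with a ≠ 1, and let (Sₙ)ₙ∈ℕ be a sequence of subsets of B each having a supremum in B. Then there is a decreasing sequence (bₙ) of elements of B with each bₙ ≠ 0 and b₀ ≤ a* such that for each n: if bₙ ∧ ⋁Sₙ ≠ 0 then there exists s ∈ Sₙ with b₍ₙ₊₁₎ ≤ s, and the filter generated by {bₙ : n ∈ ℕ} is proper and extends to an ultrafilter U with a ∉ U which meets each Sₙ whose supremum lies in U. -/
/-- A proper filter as a predicate on sets. -/
def IsPF {B : Type*} [BooleanAlgebra B] (F : Set B) : Prop :=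
  ⊤ ∈ F ∧ ⊥ ∉ F ∧ (∀ x y : B, x ∈ F → y ∈ F → x ⊓ y ∈ F) ∧
    ∀ x y : B, x ∈ F → x ≤ y → y ∈ F

theorem exists_ba_ultrafilter {B : Type*} [BooleanAlgebra B] (F0 : Set B)
    (h0 : IsPF F0) : ∃ U : BAUltrafilter B, F0 ⊆ U.carrier := by
  obtain ⟨M, hFM, hMmem, hMmax⟩ :
      ∃ M, F0 ⊆ M ∧ Maximal (fun F => IsPF F ∧ F0 ⊆ F) M := by
    have := zorn_subset_nonempty {F : Set B | IsPF F ∧ F0 ⊆ F} ?_ F0 ⟨h0, le_refl _⟩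
    · obtain ⟨m, hm1, hm2⟩ := this
      exact ⟨m, hm1, hm2⟩
    · intro c hc hchain hne
      refine ⟨⋃₀ c, ⟨⟨?_, ?_, ?_, ?_⟩, ?_⟩, fun s hs => Set.subset_sUnion_of_mem hs⟩
      · obtain ⟨F, hF⟩ := hne
        exact ⟨F, hF, (hc hF).1.1⟩
      · rintro ⟨F, hF, hbot⟩
        exact (hc hF).1.2.1 hbot
      · rintro x y ⟨F, hF, hx⟩ ⟨G, hG, hy⟩
        rcases hchain.total hF hG with h | h
        · exact ⟨G, hG, (hc hG).1.2.2.1 x y (h hx) hy⟩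
        · exact ⟨F, hF, (hc hF).1.2.2.1 x y hx (h hy)⟩
      · rintro x y ⟨F, hF, hx⟩ hxy
        exact ⟨F, hF, (hc hF).1.2.2.2 x y hx hxy⟩
      · obtain ⟨F, hF⟩ := hne
        exact (hc hF).2.trans (Set.subset_sUnion_of_mem hF)
  obtain ⟨⟨htop, hbot, hinf, hup⟩, -⟩ := hMmem
  refine ⟨⟨M, htop, hbot, hinf, hup, ?_⟩, hFM⟩
  intro x
  by_contra h
  push_neg at h
  obtain ⟨hx, hxc⟩ := h
  set M' : Set B := {y | ∃ f ∈ M, f ⊓ x ≤ y} with hM'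
  have hMM' : M ⊆ M' := fun f hf => ⟨f, hf, inf_le_left⟩
  have hM'mem : IsPF M' ∧ F0 ⊆ M' := by
    refine ⟨⟨⟨⊤, htop, le_top⟩, ?_, ?_, ?_⟩, hFM.trans hMM'⟩
    · rintro ⟨f, hf, hfx⟩
      have : f ≤ xᶜ := by
        have hd : Disjoint f x := disjoint_iff.mpr (le_bot_iff.mp hfx)
        exact le_compl_iff_disjoint_right.mpr hd
      exact hxc (hup f xᶜ hf this)
    · rintro y z ⟨f, hf, hfx⟩ ⟨g, hg, hgx⟩
      refine ⟨f ⊓ g, hinf f g hf hg, ?_⟩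
      calc f ⊓ g ⊓ x ≤ (f ⊓ x) ⊓ (g ⊓ x) := by
            simp only [le_inf_iff]
            exact ⟨⟨inf_le_left.trans inf_le_left, inf_le_right⟩,
              ⟨inf_le_left.trans inf_le_right, inf_le_right⟩⟩
        _ ≤ y ⊓ z := inf_le_inf hfx hgx
    · rintro y z ⟨f, hf, hfx⟩ hyz
      exact ⟨f, hf, hfx.trans hyz⟩
  have : M' ⊆ M := hMmax hM'mem hMM'
  exact hx (this ⟨⊤, htop, by simp⟩)

/-- The inductive construction in the proof of the Rasiowa–Sikorski lemma:
a decreasing sequence of nonzero elements below `aᶜ` handling each supremum,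
generating a proper filter that extends to an ultrafilter avoiding `a`
and meeting each `Sₙ` whose supremum it contains. -/
theorem rasiowa_sikorski_construction {B : Type*} [BooleanAlgebra B]
    (a : B) (ha : a ≠ ⊤) (S : ℕ → Set B)
    (hsup : ∀ n, ∃ m : B, IsLUB (S n) m) :
    ∃ b : ℕ → B,
      (∀ n, b (n + 1) ≤ b n) ∧
      b 0 ≤ aᶜ ∧
      (∀ n, b n ≠ ⊥) ∧
      (∀ n, ∀ m : B, IsLUB (S n) m → b n ⊓ m ≠ ⊥ → ∃ s ∈ S n, b (n + 1) ≤ s) ∧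
      ∃ U : BAUltrafilter B,
        (∀ n, b n ∈ U.carrier) ∧ a ∉ U.carrier ∧
        ∀ n, ∀ m : B, IsLUB (S n) m → m ∈ U.carrier →
          (S n ∩ U.carrier).Nonempty := by
  classical
  -- the recursive step
  let next : ℕ → B → B := fun n bn =>
    if h : ∃ s ∈ S n, bn ⊓ s ≠ ⊥ then bn ⊓ h.choose else bn
  let b : ℕ → B := fun n => Nat.rec aᶜ (fun k bk => next k bk) n
  have hbsucc : ∀ n, b (n + 1) = next n (b n) := fun n => rfl
  have hdec : ∀ n, b (n + 1) ≤ b n := by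
    intro n
    rw [hbsucc]
    by_cases h : ∃ s ∈ S n, b n ⊓ s ≠ ⊥
    · simp only [next, dif_pos h]; exact inf_le_left
    · simp only [next, dif_neg h]; exact le_refl _
  have hne : ∀ n, b n ≠ ⊥ := by
    intro n
    induction n with
    | zero =>
      simp only [b]
      intro h
      exact ha (by simpa using congrArg compl h)
    | succ k ih =>
      rw [hbsucc]
      by_cases h : ∃ s ∈ S k, b k ⊓ s ≠ ⊥
      · simp only [next, dif_pos h]
        exact h.choose_spec.2
      · simp only [next, dif_neg h]; exact ih
  have hmain : ∀ n, ∀ m : B, IsLUB (S n) m → b n ⊓ m ≠ ⊥ →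
      ∃ s ∈ S n, b (n + 1) ≤ s := by
    intro n m hm hbm
    have h : ∃ s ∈ S n, b n ⊓ s ≠ ⊥ := by
      by_contra hcon
      push_neg at hcon
      apply hbm
      have : m ≤ (b n)ᶜ := by
        apply hm.2
        intro s hs
        exact le_compl_iff_disjoint_right.mpr
          (disjoint_iff.mpr (by rw [inf_comm]; exact hcon s hs))
      have : Disjoint (b n) m :=
        le_compl_iff_disjoint_left.mp this
      exact disjoint_iff.mp this
    refine ⟨h.choose, h.choose_spec.1, ?_⟩
    rw [hbsucc]
    simp only [next, dif_pos h]
    exact inf_le_right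
  -- generated filter
  have hanti : ∀ {i j : ℕ}, i ≤ j → b j ≤ b i := by
    intro i j hij
    induction hij with
    | refl => exact le_refl _
    | step h ih => exact le_trans (hdec _) ih
  set F0 : Set B := {x | ∃ n, b n ≤ x} with hF0
  have hPF : IsPF F0 := by
    refine ⟨⟨0, le_top⟩, ?_, ?_, ?_⟩
    · rintro ⟨n, hn⟩
      exact hne n (le_bot_iff.mp hn)
    · rintro x y ⟨n, hn⟩ ⟨k, hk⟩
      exact ⟨max n k, le_inf ((hanti (le_max_left n k)).trans hn)
        ((hanti (le_max_right n k)).trans hk)⟩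
    · rintro x y ⟨n, hn⟩ hxy
      exact ⟨n, hn.trans hxy⟩
  obtain ⟨U, hU⟩ := exists_ba_ultrafilter F0 hPF
  refine ⟨b, hdec, le_refl _, hne, hmain, U, ?_, ?_, ?_⟩
  · exact fun n => hU ⟨n, le_refl _⟩
  · intro haU
    have hacU : aᶜ ∈ U.carrier := hU ⟨0, le_refl _⟩
    have : a ⊓ aᶜ ∈ U.carrier := U.inf_mem _ _ haU hacU
    rw [inf_compl_eq_bot] at this
    exact U.bot_not_mem this
  · intro n m hm hmU
    have hbnU : b n ∈ U.carrier := hU ⟨n, le_refl _⟩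
    have hinf : b n ⊓ m ∈ U.carrier := U.inf_mem _ _ hbnU hmU
    have hnb : b n ⊓ m ≠ ⊥ := fun h => U.bot_not_mem (h ▸ hinf)
    obtain ⟨s, hs, hle⟩ := hmain n m hm hnb
    exact ⟨s, hs, U.up_closed _ _ (hU ⟨n + 1, le_refl _⟩) hle⟩
end
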